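/- Given the universal Schlesinger system, the compatibility relation holds: for all m ∈ ℤ, n ≥ 1, k ≥ 1, one has L_m·B_{n+k} - L_n·B_{m+k} = -∑_{l=1}^{k-1} [B_{m+k-l}, B_{n+l}] + (n-m) B_{m+n+k}. -/

import Mathlib

abbrev Mat (N : ℕ) := Matrix (Fin N) (Fin N) ℂ

/-- The commutator bracket [X,Y] = XY - YX. -/
noncomputable def br {N : ℕ} (X Y : Mat N) : Mat N := X * Y - Y * X

/-- Given the universal Schlesinger system (in both its equivalent forms), the compatibility
relation holds: for all `m ∈ ℤ`, `n ≥ 1`, `k ≥ 1`,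
`L_m·B_{n+k} - L_n·B_{m+k} = -∑_{l=1}^{k-1} [B_{m+k-l}, B_{n+l}] + (n-m) B_{m+n+k}`.
Here `D m n` stands for `L_m · B_n` and sums over empty ranges are zero. -/
theorem universal_schlesinger_compatibility (N : ℕ) (B : ℤ → Mat N)
    (D : ℤ → ℤ → Mat N)
    (hS1 : ∀ m n : ℤ, 1 ≤ n →
        D m n = ∑ k ∈ Finset.Icc (0 : ℤ) (n - 1), br (B k) (B (m + n - k)) + n • B (m + n))
    (hS2 : ∀ m n : ℤ, 1 ≤ n →
        D m (-n) = -∑ k ∈ Finset.Icc (-n) (-1 : ℤ), br (B k) (B (m - n - k)) - n • B (m - n))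
    (hS3 : ∀ m n : ℤ, 0 ≤ m →
        D m n = ∑ k ∈ Finset.Icc (0 : ℤ) m, br (B k) (B (m + n - k)) + n • B (m + n))
    (hS4 : ∀ m n : ℤ, 0 ≤ m →
        D (-m) n = -∑ k ∈ Finset.Icc (-m + 1) (-1 : ℤ), br (B k) (B (-m + n - k))
            + n • B (-m + n)) :
    ∀ m n k : ℤ, 1 ≤ n → 1 ≤ k →
      D m (n + k) - D n (m + k) =
        -∑ l ∈ Finset.Icc (1 : ℤ) (k - 1), br (B (m + k - l)) (B (n + l))
          + (n - m) • B (m + n + k) := by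
  intro m n k hn hk
  rw [hS1 m (n + k) (by linarith), hS3 n (m + k) (by linarith)]
  have hsplit : (Finset.Icc (0 : ℤ) (n + k - 1)) =
      Finset.Icc (0 : ℤ) n ∪ Finset.Icc (n + 1) (n + k - 1) := by
    ext x; simp only [Finset.mem_Icc, Finset.mem_union]; omega
  have hdisj : Disjoint (Finset.Icc (0 : ℤ) n) (Finset.Icc (n + 1) (n + k - 1)) := by
    rw [Finset.disjoint_left]
    intro a ha hb
    simp only [Finset.mem_Icc] at ha hb
    omega
  rw [hsplit, Finset.sum_union hdisj]
  have hmap : Finset.Icc (n + 1) (n + k - 1) =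
      Finset.map (addLeftEmbedding n) (Finset.Icc (1 : ℤ) (k - 1)) := by
    rw [Finset.map_add_left_Icc]
    congr 1; ring
  have h2 : ∑ j ∈ Finset.Icc (n + 1) (n + k - 1), br (B j) (B (m + (n + k) - j))
      = -∑ l ∈ Finset.Icc (1 : ℤ) (k - 1), br (B (m + k - l)) (B (n + l)) := by
    rw [hmap, Finset.sum_map, ← Finset.sum_neg_distrib]
    refine Finset.sum_congr rfl (fun l _ => ?_)
    have e1 : (addLeftEmbedding n) l = n + l := rfl
    have e2 : m + (n + k) - (n + l) = m + k - l := by ring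
    rw [e1, e2]
    simp only [br]
    abel
  have h1 : ∑ j ∈ Finset.Icc (0 : ℤ) n, br (B j) (B (m + (n + k) - j))
      = ∑ j ∈ Finset.Icc (0 : ℤ) n, br (B j) (B (n + (m + k) - j)) := by
    refine Finset.sum_congr rfl (fun j _ => ?_)
    congr 2; ring
  rw [h1, h2]
  have e3 : m + (n + k) = m + n + k := by ring
  have e4 : n + (m + k) = m + n + k := by ring
  rw [e3, e4]
  module
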